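/- arXiv:2205.11325 — 2 statements merged into one kernel-verified Lean document; each statement's English description precedes it below -/
import Mathlib

section
/- The standard magic wand is not combinable in general: for the wand w := acc(x.f, 1/2) -* acc(x.g) over distinct locations l_f ≠ l_g, the state σ_f with full permission to l_f only and the state σ_g with full permission to l_g only both satisfy w, but (1/2)·σ_f ⊕ (1/2)·σ_g does not satisfy w. -/
/-- A state of the fractional-permission model: a permission mask
`pi : L → ℚ` (with values in `[0,1]`) and a partial heap `hp : L → Option V`,
subject to the validity condition that positive permission implies a defined value. -/
structure FState (L V : Type) where
  pi : L → ℚ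
  hp : L → Option V
  nonneg : ∀ l, 0 ≤ pi l
  le_one : ∀ l, pi l ≤ 1
  valid : ∀ l, 0 < pi l → (hp l).isSome

/-- Compatibility: heaps agree on the common domain and permissions sum to at most 1. -/
def compat {L V : Type} (s1 s2 : FState L V) : Prop :=
  (∀ l v1 v2, s1.hp l = some v1 → s2.hp l = some v2 → v1 = v2) ∧
  (∀ l, s1.pi l + s2.pi l ≤ 1)

/-- Union of partial heaps. -/
def hunion {V : Type} (o1 o2 : Option V) : Option V :=
  match o1 with
  | some v => some v
  | none => o2

open Classical in
/-- Partial addition of states. -/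
noncomputable def fadd {L V : Type} (s1 s2 : FState L V) : Option (FState L V) :=
  if h : compat s1 s2 then
    some { pi := fun l => s1.pi l + s2.pi l,
           hp := fun l => hunion (s1.hp l) (s2.hp l),
           nonneg := fun l => add_nonneg (s1.nonneg l) (s2.nonneg l),
           le_one := fun l => h.2 l,
           valid := by
             intro l hl
             have hl' : 0 < s1.pi l + s2.pi l := hl
             rcases h1 : s1.hp l with _ | v
             · have h2 : 0 < s2.pi l := by
                 by_contra hc
                 push_neg at hc
                 have hpos : 0 < s1.pi l := by
                   have := s2.nonneg l
                   linarith
                 have := s1.valid l hpos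
                 rw [h1] at this
                 simp at this
               have h2' := s2.valid l h2
               simp only [hunion, h1]
               exact h2'
             · simp [hunion, h1] }
  else none

/-- `t` is the state `s` with all permissions multiplied by `α` (same heap). -/
def isSmul {L V : Type} (α : ℚ) (s t : FState L V) : Prop :=
  (∀ l, t.pi l = α * s.pi l) ∧ t.hp = s.hp

/-- Separating conjunction. -/
def satStar {L V : Type} (A B : FState L V → Prop) (σ : FState L V) : Prop :=
  ∃ σ1 σ2, fadd σ1 σ2 = some σ ∧ A σ1 ∧ B σ2

/-- Fractional assertion `A^p`. -/
def fracSat {L V : Type} (p : ℚ) (A : FState L V → Prop) (σ : FState L V) : Prop :=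
  ∃ σ', A σ' ∧ isSmul p σ' σ

/-- Standard magic wand. -/
def satWand {L V : Type} (A B : FState L V → Prop) (σw : FState L V) : Prop :=
  ∀ σA σ, A σA → fadd σA σw = some σ → B σ

/-- Order induced by ⊕. -/
def fgeq {L V : Type} (σ2 σ1 : FState L V) : Prop :=
  ∃ r, fadd σ1 r = some σ2

/-- `B` is intuitionistic: closed under state extension. -/
def intuit {L V : Type} (B : FState L V → Prop) : Prop :=
  ∀ σ σ' r, B σ → fadd σ r = some σ' → B σ'

/-- `A` is combinable: `A^p * A^q ⊨ A^{p+q}`. -/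
def combinable {L V : Type} (A : FState L V → Prop) : Prop :=
  ∀ p q : ℚ, 0 < p → 0 < q → p + q ≤ 1 →
    ∀ σ, satStar (fracSat p A) (fracSat q A) σ → fracSat (p + q) A σ

/-- Some scaling of `σw` (by `0 < α ≤ 1`) is compatible with `σA`. -/
def scaledCompat {L V : Type} (σA σw : FState L V) : Prop :=
  ∃ α t, 0 < α ∧ α ≤ 1 ∧ isSmul α σw t ∧ compat σA t

/-- Truncation of `σw` so that it fits next to `σA`. -/
def trunc {L V : Type} (sA sw : FState L V) : FState L V :=
  { pi := fun l => min (sw.pi l) (1 - sA.pi l),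
    hp := sw.hp,
    nonneg := fun l => le_min (sw.nonneg l) (by linarith [sA.le_one l]),
    le_one := fun l => le_trans (min_le_left _ _) (sw.le_one l),
    valid := fun l hl => sw.valid l (lt_of_lt_of_le hl (min_le_left _ _)) }

open Classical in
/-- The transformation `R(σA, σw)` used in the definition of combinable wands. -/
noncomputable def Rtrans {L V : Type} (σA σw : FState L V) : FState L V :=
  if scaledCompat σA σw then trunc σA σw else σw

/-- Combinable magic wand `A -*c B`. -/
def satCWand {L V : Type} (A B : FState L V → Prop) (σw : FState L V) : Prop :=
  ∀ σA σ, A σA → fadd σA (Rtrans σA σw) = some σ → B σ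

/-- A stable state: positive permission iff the heap value is defined. -/
def fstable {L V : Type} (σ : FState L V) : Prop :=
  ∀ l, 0 < σ.pi l ↔ (σ.hp l).isSome

open Classical in
/-- The state with permission `q` and value `v` at the single location `l0`. -/
noncomputable def single {L V : Type} (l0 : L) (v : V) (q : ℚ)
    (h0 : 0 ≤ q) (h1 : q ≤ 1) : FState L V :=
  { pi := fun l => if l = l0 then q else 0,
    hp := fun l => if l = l0 then some v else none,
    nonneg := by intro l; by_cases h : l = l0 <;> simp [h, h0]
    le_one := by intro l; by_cases h : l = l0 <;> simp [h, h1]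
    valid := by
      intro l hl
      by_cases h : l = l0 <;> simp [h] at hl ⊢ }

/-- The binary restriction of a state. -/
noncomputable def binState {L V : Type} (σ : FState L V) : FState L V :=
  { pi := fun l => if σ.pi l = 1 then 1 else 0,
    hp := σ.hp,
    nonneg := by intro l; show 0 ≤ if σ.pi l = 1 then (1:ℚ) else 0; split <;> norm_num,
    le_one := by intro l; show (if σ.pi l = 1 then (1:ℚ) else 0) ≤ 1; split <;> norm_num,
    valid := by
      intro l hl
      have hl' : 0 < if σ.pi l = 1 then (1:ℚ) else 0 := hl
      split at hl'
      · next h => exact σ.valid l (by rw [h]; norm_num)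
      · simp at hl' }

/-- `A` is a binary assertion. -/
def binaryAssertion {L V : Type} (A : FState L V → Prop) : Prop :=
  ∀ σ, A σ → A (binState σ)

/-- Heaps agree on the common domain. -/
def heapCompat {L V : Type} (s1 s2 : FState L V) : Prop :=
  ∀ l v1 v2, s1.hp l = some v1 → s2.hp l = some v2 → v1 = v2

/-! `σf` satisfies the wand vacuously, since nothing holding `acc(x.f, 1/2)` fits next to its
full permission at `lf`, and `σg` satisfies it because it already holds `acc(x.g)`. The half-sum
leaves room for `acc(x.f, 1/2)` next to it, but adding that permission leaves only `1/2` at `lg`. -/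

section

variable {L V : Type}

lemma compat_of_fadd_eq_some {s1 s2 σ : FState L V} (h : fadd s1 s2 = some σ) :
    compat s1 s2 := by
  unfold fadd at h
  split at h
  · assumption
  · cases h

lemma pi_of_fadd_eq_some {s1 s2 σ : FState L V} (h : fadd s1 s2 = some σ) (l : L) :
    σ.pi l = s1.pi l + s2.pi l := by
  have hc := compat_of_fadd_eq_some h
  rw [fadd, dif_pos hc] at h
  obtain rfl := Option.some.inj h
  rfl

lemma hp_of_fadd_eq_some {s1 s2 σ : FState L V} (h : fadd s1 s2 = some σ) (l : L) :
    σ.hp l = hunion (s1.hp l) (s2.hp l) := by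
  have hc := compat_of_fadd_eq_some h
  rw [fadd, dif_pos hc] at h
  obtain rfl := Option.some.inj h
  rfl

lemma exists_fadd_eq_some_of_compat {s1 s2 : FState L V} (h : compat s1 s2) :
    ∃ σ, fadd s1 s2 = some σ := by
  rw [fadd, dif_pos h]
  exact ⟨_, rfl⟩

section single

variable {l0 : L} {v : V} {q : ℚ} (h0 : 0 ≤ q) (h1 : q ≤ 1)

lemma single_pi_self : (single l0 v q h0 h1).pi l0 = q := if_pos rfl

lemma single_pi_of_ne {l : L} (hl : l ≠ l0) : (single l0 v q h0 h1).pi l = 0 := if_neg hl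

lemma single_hp_self : (single l0 v q h0 h1).hp l0 = some v := if_pos rfl

lemma single_hp_of_ne {l : L} (hl : l ≠ l0) : (single l0 v q h0 h1).hp l = none := if_neg hl

lemma compat_single_of_hp_eq {σ : FState L V} (hv : σ.hp l0 = some v)
    (hq : σ.pi l0 + q ≤ 1) : compat (single l0 v q h0 h1) σ := by
  refine ⟨fun l v1 v2 hv1 hv2 => ?_, fun l => ?_⟩
  · by_cases hl : l = l0
    · subst hl
      rw [single_hp_self, Option.some.injEq] at hv1
      rw [hv, Option.some.injEq] at hv2
      exact hv1.symm.trans hv2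
    · rw [single_hp_of_ne h0 h1 hl] at hv1
      cases hv1
  · by_cases hl : l = l0
    · rw [hl, single_pi_self]
      linarith
    · rw [single_pi_of_ne h0 h1 hl, zero_add]
      exact σ.le_one l

end single

lemma satWand_of_forall_not_compat {A B : FState L V → Prop} {σw : FState L V}
    (h : ∀ σA, A σA → ¬ compat σA σw) : satWand A B σw :=
  fun σA _ hA hsum => absurd (compat_of_fadd_eq_some hsum) (h σA hA)

lemma satWand_acc_of_pi_eq_one {l : L} {p : ℚ} (hp : 0 < p) {B : FState L V → Prop}
    {σw : FState L V} (hw : σw.pi l = 1) : satWand (fun σ => p ≤ σ.pi l) B σw :=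
  satWand_of_forall_not_compat fun σA hA hc => by linarith [hc.2 l]

lemma satWand_of_le_pi {A : FState L V → Prop} {l : L} {q : ℚ} {σw : FState L V}
    (hw : q ≤ σw.pi l) : satWand A (fun σ => q ≤ σ.pi l) σw :=
  fun σA _ _ hsum => by linarith [pi_of_fadd_eq_some hsum l, σA.nonneg l]

/-- The premise state refuting the wand is permission `p` to `lf` carrying the value `σ` already
stores there: it fits next to `σ` but adds nothing at `lg`. -/
lemma not_satWand_acc_of_hp_eq {lf lg : L} (hne : lf ≠ lg) {v : V} {p q : ℚ} (hp : 0 ≤ p)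
    {σ : FState L V} (hv : σ.hp lf = some v) (hf : σ.pi lf + p ≤ 1) (hg : σ.pi lg < q) :
    ¬ satWand (fun σ' => p ≤ σ'.pi lf) (fun σ' => q ≤ σ'.pi lg) σ := by
  have hp1 : p ≤ 1 := by linarith [σ.nonneg lf]
  intro hw
  obtain ⟨σ', hsum⟩ := exists_fadd_eq_some_of_compat (compat_single_of_hp_eq hp hp1 hv hf)
  have hB : q ≤ σ'.pi lg := hw _ σ' (single_pi_self hp hp1).ge hsum
  rw [pi_of_fadd_eq_some hsum, single_pi_of_ne hp hp1 hne.symm, zero_add] at hB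
  linarith

end

/-- the standard wand `w := acc(x.f, 1/2) -* acc(x.g)` is not
combinable: the state `σf` with full permission to `lf` only and the state `σg`
with full permission to `lg` only both satisfy `w`, but
`(1/2)·σf ⊕ (1/2)·σg` does not satisfy `w`. -/
theorem wand_not_combinable {L V : Type} (lf lg : L) (hne : lf ≠ lg) (v : V) :
    satWand (fun σ => (1:ℚ)/2 ≤ σ.pi lf) (fun σ => 1 ≤ σ.pi lg)
        (single lf v 1 (by norm_num) (by norm_num)) ∧
    satWand (fun σ => (1:ℚ)/2 ≤ σ.pi lf) (fun σ => 1 ≤ σ.pi lg)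
        (single lg v 1 (by norm_num) (by norm_num)) ∧
    (∀ t1 t2 σ : FState L V,
        isSmul (1/2) (single lf v 1 (by norm_num) (by norm_num)) t1 →
        isSmul (1/2) (single lg v 1 (by norm_num) (by norm_num)) t2 →
        fadd t1 t2 = some σ →
        ¬ satWand (fun σ' => (1:ℚ)/2 ≤ σ'.pi lf) (fun σ' => 1 ≤ σ'.pi lg) σ) := by
  refine ⟨satWand_acc_of_pi_eq_one (by norm_num) (single_pi_self _ _),
    satWand_of_le_pi (single_pi_self _ _).ge, fun t1 t2 σ h1 h2 hsum => ?_⟩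
  have hv : σ.hp lf = some v := by
    rw [hp_of_fadd_eq_some hsum, h1.2, h2.2, single_hp_self, hunion]
  refine not_satWand_acc_of_hp_eq hne (by norm_num) hv ?_ ?_
  · rw [pi_of_fadd_eq_some hsum, h1.1, h2.1, single_pi_self, single_pi_of_ne _ _ hne]
    norm_num
  · rw [pi_of_fadd_eq_some hsum, h1.1, h2.1, single_pi_self, single_pi_of_ne _ _ hne.symm]
    norm_num
end

section
/- If B is intuitionistic and combinable, then the combinable wand A -*c B is combinable: for positive rationals p, q with p + q ≤ 1, (A -*c B)^p * (A -*c B)^q ⊨ (A -*c B)^{p+q}. -/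
/-!
Write `σ = p·w₁ ⊕ q·w₂` with `w₁, w₂ ⊨ A -*c B` and take for the witness the convex combination
`w = θ·w₁ + (1 - θ)·w₂`, `θ = p / (p + q)`, so that `σ = (p + q)·w`. If `σ_A ⊨ A` fits next to
`R(σ_A, w)`, then some scaling of `w` is compatible with `σ_A` (otherwise `R(σ_A, w) = w` itself
would be), hence so are scalings of `w₁` and `w₂`, and both wands fire on the truncations:
`ρᵢ = σ_A ⊕ R(σ_A, wᵢ) ⊨ B`. Combinability of `B` gives `θ·ρ₁ + (1 - θ)·ρ₂ ⊨ B`. Since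
`x ↦ min x (1 - π_A)` is concave, this state lies below `σ_A ⊕ R(σ_A, w)` in the `⊕`-order,
and `B` is intuitionistic.
-/

section Heaps

variable {V : Type} {a b c : Option V} {v : V}

def optCompat (a b : Option V) : Prop :=
  ∀ v1 v2, a = some v1 → b = some v2 → v1 = v2

theorem optCompat_self (a : Option V) : optCompat a a := by
  rintro v1 v2 rfl h
  exact Option.some.inj h

theorem optCompat.symm (h : optCompat a b) : optCompat b a :=
  fun v1 v2 h1 h2 => (h v2 v1 h2 h1).symm

theorem isSome_hunion : (hunion a b).isSome ↔ a.isSome ∨ b.isSome := by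
  cases a <;> simp [hunion]

theorem eq_some_or_eq_some_of_hunion_eq_some (h : hunion a b = some v) :
    a = some v ∨ b = some v := by
  cases a <;> simp_all [hunion]

theorem hunion_eq_some_iff (h : optCompat a b) : hunion a b = some v ↔ a = some v ∨ b = some v := by
  refine ⟨eq_some_or_eq_some_of_hunion_eq_some, ?_⟩
  cases a with
  | none => simp [hunion]
  | some u =>
    rintro (hu | hv)
    · exact hu
    · rw [h u v rfl hv]
      rfl

theorem optCompat_hunion_left (h : optCompat a b) :
    optCompat (hunion a b) c ↔ optCompat a c ∧ optCompat b c := by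
  simp only [optCompat, hunion_eq_some_iff h, or_imp, forall_and]

theorem optCompat_hunion_right (h : optCompat b c) :
    optCompat a (hunion b c) ↔ optCompat a b ∧ optCompat a c := by
  simp only [optCompat, hunion_eq_some_iff h, or_imp, forall_and]

end Heaps

theorem mul_min_add_mul_min_le_min {K : Type*} [CommRing K] [LinearOrder K] [IsStrictOrderedRing K]
    {θ : K} (a b c : K) (h0 : 0 ≤ θ) (h1 : θ ≤ 1) :
    θ * min a c + (1 - θ) * min b c ≤ min (θ * a + (1 - θ) * b) c := by
  rw [mul_min_of_nonneg _ _ h0, mul_min_of_nonneg _ _ (sub_nonneg.2 h1)]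
  calc _ ≤ min (θ * a + (1 - θ) * b) (θ * c + (1 - θ) * c) := min_add_min_le_min_add_add
    _ = _ := by ring_nf

section States

variable {L V : Type}

@[ext]
theorem FState.ext {s t : FState L V} (hpi : s.pi = t.pi) (hhp : s.hp = t.hp) : s = t := by
  cases s; cases t; cases hpi; cases hhp; rfl

theorem heapCompat_congr {s1 s2 t1 t2 : FState L V} (h1 : s1.hp = t1.hp) (h2 : s2.hp = t2.hp) :
    heapCompat s1 s2 ↔ heapCompat t1 t2 := by
  unfold heapCompat
  rw [h1, h2]

theorem fadd_eq_some_iff {s1 s2 s : FState L V} :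
    fadd s1 s2 = some s ↔ compat s1 s2 ∧ (∀ l, s.pi l = s1.pi l + s2.pi l) ∧
      ∀ l, s.hp l = hunion (s1.hp l) (s2.hp l) := by
  unfold fadd
  split_ifs with h
  · rw [Option.some_inj]
    constructor
    · rintro rfl
      exact ⟨h, fun _ => rfl, fun _ => rfl⟩
    · rintro ⟨-, hpi, hhp⟩
      ext l <;> simp [hpi, hhp]
  · simp [h]

theorem exists_fadd_eq_some {s1 s2 : FState L V} (h : compat s1 s2) : ∃ s, fadd s1 s2 = some s := by
  rw [fadd, dif_pos h]
  exact ⟨_, rfl⟩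

theorem exists_isSmul {c : ℚ} (hc : 0 ≤ c) (s : FState L V) (h : ∀ l, c * s.pi l ≤ 1) :
    ∃ t, isSmul c s t :=
  ⟨⟨fun l => c * s.pi l, s.hp, fun l => mul_nonneg hc (s.nonneg l), h,
    fun l hl => s.valid l (pos_of_mul_pos_right hl hc)⟩, fun _ => rfl, rfl⟩

theorem isSmul_one_iff {s t : FState L V} : isSmul 1 s t ↔ t = s := by
  constructor
  · rintro ⟨hpi, hhp⟩
    ext l
    · simp [hpi]
    · rw [hhp]
  · rintro rfl
    exact ⟨fun l => (one_mul _).symm, rfl⟩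

def isConvexComb (θ : ℚ) (s1 s2 s : FState L V) : Prop :=
  (∀ l, s.pi l = θ * s1.pi l + (1 - θ) * s2.pi l) ∧ ∀ l, s.hp l = hunion (s1.hp l) (s2.hp l)

theorem exists_isConvexComb {θ : ℚ} (h0 : 0 ≤ θ) (h1 : θ ≤ 1) (s1 s2 : FState L V) :
    ∃ s, isConvexComb θ s1 s2 s := by
  have h1' : 0 ≤ 1 - θ := sub_nonneg.2 h1
  refine ⟨⟨fun l => θ * s1.pi l + (1 - θ) * s2.pi l, fun l => hunion (s1.hp l) (s2.hp l),
    fun l => ?_, fun l => ?_, fun l hl => ?_⟩, fun _ => rfl, fun _ => rfl⟩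
  · have := s1.nonneg l
    have := s2.nonneg l
    positivity
  · nlinarith [s1.le_one l, s2.le_one l]
  · rw [isSome_hunion]
    rcases (s1.nonneg l).eq_or_lt with h | h
    · refine Or.inr (s2.valid l (pos_of_mul_pos_right ?_ h1'))
      simpa [← h] using hl
    · exact Or.inl (s1.valid l h)

theorem combinable.of_isConvexComb {B : FState L V → Prop} (hB : combinable B) {θ : ℚ}
    (h0 : 0 < θ) (h1 : θ < 1) {s1 s2 s : FState L V} (h12 : heapCompat s1 s2)
    (hs : isConvexComb θ s1 s2 s) (hB1 : B s1) (hB2 : B s2) : B s := by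
  have h1' : 0 < 1 - θ := sub_pos.2 h1
  obtain ⟨t1, ht1⟩ := exists_isSmul h0.le s1 fun l => by nlinarith [s1.nonneg l, s1.le_one l]
  obtain ⟨t2, ht2⟩ := exists_isSmul h1'.le s2 fun l => by nlinarith [s2.nonneg l, s2.le_one l]
  have hpi : ∀ l, s.pi l = t1.pi l + t2.pi l := fun l => by rw [hs.1, ht1.1, ht2.1]
  have hadd : fadd t1 t2 = some s :=
    fadd_eq_some_iff.2 ⟨⟨(heapCompat_congr ht1.2 ht2.2).2 h12, fun l => hpi l ▸ s.le_one l⟩,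
      hpi, fun l => by rw [hs.2, ht1.2, ht2.2]⟩
  obtain ⟨s', hs', hsmul⟩ :=
    hB θ (1 - θ) h0 h1' (by linarith) s ⟨t1, t2, hadd, ⟨s1, hB1, ht1⟩, ⟨s2, hB2, ht2⟩⟩
  rw [add_sub_cancel, isSmul_one_iff] at hsmul
  exact hsmul ▸ hs'

theorem fgeq_of_le {s t : FState L V} (hpi : ∀ l, t.pi l ≤ s.pi l)
    (hhp : ∀ l v, t.hp l = some v → s.hp l = some v) : fgeq s t := by
  let r : FState L V :=
    ⟨fun l => s.pi l - t.pi l, s.hp, fun l => sub_nonneg.2 (hpi l),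
      fun l => by linarith [t.nonneg l, s.le_one l],
      fun l hl => s.valid l (by linarith [t.nonneg l, (hl : 0 < s.pi l - t.pi l)])⟩
  refine ⟨r, fadd_eq_some_iff.2 ⟨⟨fun l v1 v2 h1 h2 => ?_, fun l => ?_⟩, fun l => ?_, fun l => ?_⟩⟩
  · exact Option.some.inj ((hhp l v1 h1).symm.trans h2)
  · show t.pi l + (s.pi l - t.pi l) ≤ 1
    linarith [s.le_one l]
  · show s.pi l = t.pi l + (s.pi l - t.pi l)
    ring
  · show s.hp l = hunion (t.hp l) (s.hp l)
    cases h : t.hp l with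
    | none => rfl
    | some v => exact hhp l v h

section Wand

variable {L V : Type} {σA w : FState L V}

theorem heapCompat_of_scaledCompat (h : scaledCompat σA w) : heapCompat σA w := by
  obtain ⟨_, _, _, _, ht, hcompat⟩ := h
  exact (heapCompat_congr rfl ht.2).1 hcompat.1

theorem scaledCompat_of_fadd_Rtrans {σ : FState L V} (h : fadd σA (Rtrans σA w) = some σ) :
    scaledCompat σA w := by
  by_contra hn
  rw [Rtrans, if_neg hn] at h
  exact hn ⟨1, w, one_pos, le_rfl, isSmul_one_iff.2 rfl, (fadd_eq_some_iff.1 h).1⟩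

theorem scaledCompat.mono {w' : FState L V} (hsc : scaledCompat σA w) (hA : heapCompat σA w')
    {c : ℚ} (hc0 : 0 < c) (hc1 : c ≤ 1) (hle : ∀ l, c * w'.pi l ≤ w.pi l) :
    scaledCompat σA w' := by
  obtain ⟨α, t, hα0, hα1, ht, hcompat⟩ := hsc
  have hbound : ∀ l, σA.pi l + α * c * w'.pi l ≤ 1 := fun l => by
    have := hcompat.2 l
    rw [ht.1 l] at this
    nlinarith [hle l]
  obtain ⟨t', ht'⟩ := exists_isSmul (c := α * c) (by positivity) w' fun l => by
    linarith [hbound l, σA.nonneg l]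
  exact ⟨α * c, t', mul_pos hα0 hc0, by nlinarith, ht', (heapCompat_congr rfl ht'.2).2 hA,
    fun l => by rw [ht'.1 l]; exact hbound l⟩

theorem satCWand.exists_fadd_trunc {A B : FState L V → Prop} (hw : satCWand A B w) (hA : A σA)
    (hsc : scaledCompat σA w) : ∃ ρ, fadd σA (trunc σA w) = some ρ ∧ B ρ := by
  obtain ⟨ρ, hρ⟩ := exists_fadd_eq_some (s1 := σA) (s2 := trunc σA w)
    ⟨heapCompat_of_scaledCompat (w := w) hsc, fun l => by
      change σA.pi l + min (w.pi l) (1 - σA.pi l) ≤ 1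
      linarith [min_le_right (w.pi l) (1 - σA.pi l)]⟩
  exact ⟨ρ, hρ, hw σA ρ hA (by rwa [Rtrans, if_pos hsc])⟩

variable {w1 w2 ρ1 ρ2 : FState L V}

theorem heapCompat_of_fadd_trunc (hA1 : heapCompat σA w1) (hA2 : heapCompat σA w2)
    (h12 : heapCompat w1 w2) (hρ1 : fadd σA (trunc σA w1) = some ρ1)
    (hρ2 : fadd σA (trunc σA w2) = some ρ2) : heapCompat ρ1 ρ2 := fun l => by
  change optCompat (ρ1.hp l) (ρ2.hp l)
  rw [(fadd_eq_some_iff.1 hρ1).2.2, (fadd_eq_some_iff.1 hρ2).2.2]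
  refine (optCompat_hunion_left (hA1 l)).2 ⟨?_, ?_⟩ <;>
    refine (optCompat_hunion_right (hA2 l)).2 ⟨?_, ?_⟩
  exacts [optCompat_self _, hA2 l, optCompat.symm (hA1 l), h12 l]

theorem fgeq_fadd_trunc_of_isConvexComb (hA1 : heapCompat σA w1) (hA2 : heapCompat σA w2)
    (h12 : heapCompat w1 w2) (hρ1 : fadd σA (trunc σA w1) = some ρ1)
    (hρ2 : fadd σA (trunc σA w2) = some ρ2) {θ : ℚ} (h0 : 0 ≤ θ) (h1 : θ ≤ 1) {ρ σ : FState L V}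
    (hw : isConvexComb θ w1 w2 w) (hρ : isConvexComb θ ρ1 ρ2 ρ)
    (hσ : fadd σA (trunc σA w) = some σ) : fgeq σ ρ := by
  obtain ⟨-, hρ1pi, hρ1hp⟩ := fadd_eq_some_iff.1 hρ1
  obtain ⟨-, hρ2pi, hρ2hp⟩ := fadd_eq_some_iff.1 hρ2
  obtain ⟨-, hσpi, hσhp⟩ := fadd_eq_some_iff.1 hσ
  refine fgeq_of_le (fun l => ?_) (fun l v hv => ?_)
  · have hmin := mul_min_add_mul_min_le_min (w1.pi l) (w2.pi l) (1 - σA.pi l) h0 h1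
    rw [← hw.1 l] at hmin
    rw [hρ.1, hρ1pi, hρ2pi, hσpi]
    change θ * (σA.pi l + min (w1.pi l) (1 - σA.pi l)) +
      (1 - θ) * (σA.pi l + min (w2.pi l) (1 - σA.pi l)) ≤ σA.pi l + min (w.pi l) (1 - σA.pi l)
    linear_combination hmin
  · rw [hρ.2, hρ1hp, hρ2hp] at hv
    rw [hσhp]
    change hunion (σA.hp l) (w.hp l) = some v
    rw [hw.2, hunion_eq_some_iff ((optCompat_hunion_right (h12 l)).2 ⟨hA1 l, hA2 l⟩),
      hunion_eq_some_iff (h12 l)]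
    rcases eq_some_or_eq_some_of_hunion_eq_some hv with hv | hv <;>
      rcases eq_some_or_eq_some_of_hunion_eq_some hv with hv | hv <;> tauto

theorem satCWand_of_isConvexComb {A B : FState L V → Prop} (hBi : intuit B)
    (hBc : combinable B) {θ : ℚ} (h0 : 0 < θ) (h1 : θ < 1)
    (h12 : heapCompat w1 w2) (hw1 : satCWand A B w1) (hw2 : satCWand A B w2)
    (hw : isConvexComb θ w1 w2 w) : satCWand A B w := by
  intro σA σ hA hσ
  have hsc : scaledCompat σA w := scaledCompat_of_fadd_Rtrans hσ
  rw [Rtrans, if_pos hsc] at hσ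
  have hA12 : ∀ l, optCompat (σA.hp l) (w1.hp l) ∧ optCompat (σA.hp l) (w2.hp l) := fun l =>
    (optCompat_hunion_right (h12 l)).1 (hw.2 l ▸ heapCompat_of_scaledCompat hsc l)
  have hA1 : heapCompat σA w1 := fun l => (hA12 l).1
  have hA2 : heapCompat σA w2 := fun l => (hA12 l).2
  obtain ⟨ρ1, hρ1, hB1⟩ := hw1.exists_fadd_trunc hA <|
    hsc.mono hA1 h0 h1.le fun l => by nlinarith [hw.1 l, w2.nonneg l]
  obtain ⟨ρ2, hρ2, hB2⟩ := hw2.exists_fadd_trunc hA <|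
    hsc.mono hA2 (sub_pos.2 h1) (by linarith) fun l => by nlinarith [hw.1 l, w1.nonneg l]
  obtain ⟨ρ, hρ⟩ := exists_isConvexComb h0.le h1.le ρ1 ρ2
  obtain ⟨r, hr⟩ :=
    fgeq_fadd_trunc_of_isConvexComb hA1 hA2 h12 hρ1 hρ2 h0.le h1.le hw hρ hσ
  have hBρ := hBc.of_isConvexComb h0 h1 (heapCompat_of_fadd_trunc hA1 hA2 h12 hρ1 hρ2) hρ hB1 hB2
  exact hBi ρ σ r hBρ hr

theorem isSmul_of_fadd_of_isConvexComb {p q : ℚ} (hpq : 0 < p + q) {σ1 σ2 σ : FState L V}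
    (h1 : isSmul p w1 σ1) (h2 : isSmul q w2 σ2)
    (h : fadd σ1 σ2 = some σ) (hw : isConvexComb (p / (p + q)) w1 w2 w) :
    isSmul (p + q) w σ := by
  obtain ⟨-, hpi, hhp⟩ := fadd_eq_some_iff.1 h
  refine ⟨fun l => ?_, funext fun l => ?_⟩
  · rw [hpi, h1.1, h2.1, hw.1]
    field_simp
    ring
  · rw [hhp, h1.2, h2.2, hw.2]

end Wand

/-- if `B` is intuitionistic and combinable, then the combinable
wand `A -*c B` is combinable. -/
theorem cwand_combinable {L V : Type} (A B : FState L V → Prop)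
    (hBi : intuit B) (hBc : combinable B) :
    combinable (satCWand A B) := by
  rintro p q hp hq - σ ⟨σ1, σ2, hσ, ⟨w1, hw1, h1⟩, ⟨w2, hw2, h2⟩⟩
  have hpq : 0 < p + q := add_pos hp hq
  have h12 : heapCompat w1 w2 := (heapCompat_congr h1.2 h2.2).1 (fadd_eq_some_iff.1 hσ).1.1
  have hθ0 : 0 < p / (p + q) := div_pos hp hpq
  have hθ1 : p / (p + q) < 1 := (div_lt_one hpq).2 (by linarith)
  obtain ⟨w, hw⟩ := exists_isConvexComb hθ0.le hθ1.le w1 w2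
  exact ⟨w, satCWand_of_isConvexComb hBi hBc hθ0 hθ1 h12 hw1 hw2 hw,
    isSmul_of_fadd_of_isConvexComb hpq h1 h2 hσ hw⟩
end States
end
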